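/- In the setting of Proposition 5.6 (M satisfying the reduction condition, U_M nonempty), the set U_{M,min} of minimizers of w_p on U_M decomposes as a disjoint union over the set Γ_M of sequences (γ_0,...,γ_{a−1}) of good elements with Σ_k p^k γ_k ∈ M and Σ_k w(γ_k) = w_p(M): namely U_{M,min} = ⋃ U(γ_0,...,γ_{a−1}), where U(γ_0,...,γ_{a−1}) consists of those u with u_i = Σ_k u_i^{(k)} p^k for some choice of u^{(k)} ∈ U⁺_min(γ_k) for each k, and these subsets are pairwise disjoint. -/

import Mathlib

/-!
Write `s` for the base-`p` digit sum. For `u` with entries `< q = p ^ a` the `p`-weight is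
`∑ᵢ s(uᵢ)`, and `u = ∑ₖ pᵏ d⁽ᵏ⁾` where `d⁽ᵏ⁾` is the vector of `k`-th digits.

The reduction condition lets one replace a coordinate `x ≥ q` by `x / q + x % q`, which differs
from `x` by a multiple of `q - 1`, without leaving `M`; since `s(x / q + x % q) ≤ s(x)`, every
`c` over `M` can be brought into `U_M` at weight at most `∑ᵢ s(cᵢ)`. Now let `u` be a minimizer and
let `v` represent the same element `γ_k` as `d⁽ᵏ⁾`. Swapping `d⁽ᵏ⁾` for `v` in `u` and reducing
gives `∑ d⁽ᵏ⁾ ≤ ∑ s(vᵢ) ≤ ∑ vᵢ`. So `d⁽ᵏ⁾` is a minimal representation of `γ_k`, and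
`s(vᵢ) < vᵢ` as soon as `vᵢ ≥ p` shows that `γ_k` is good. Conversely, minimal representations
with entries `< p` compose to a point of `U_M` of weight `∑ₖ w(γ_k)`, and uniqueness of base-`p`
digits makes the sets `U(γ)` pairwise disjoint.
-/

open Finset

namespace Nat

variable {p : ℕ}

-- Legendre: `(p - 1) * v_p(x!) = x - s(x)`, and `x! * y! ∣ (x + y)!`.
theorem digits_sum_add_le [Fact p.Prime] (x y : ℕ) :
    (p.digits (x + y)).sum ≤ (p.digits x).sum + (p.digits y).sum := by
  have hv : padicValNat p x ! + padicValNat p y ! ≤ padicValNat p (x + y)! := by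
    rw [← padicValNat.mul (factorial_ne_zero x) (factorial_ne_zero y)]
    exact (padicValNat_dvd_iff_le (factorial_ne_zero _)).mp
      (pow_padicValNat_dvd.trans (factorial_mul_factorial_dvd_factorial_add x y))
  have := Nat.mul_le_mul_left (p - 1) hv
  rw [mul_add, sub_one_mul_padicValNat_factorial, sub_one_mul_padicValNat_factorial,
    sub_one_mul_padicValNat_factorial] at this
  have := digit_sum_le p x
  have := digit_sum_le p y
  have := digit_sum_le p (x + y)
  omega

theorem digits_sum_lt_self [hp : Fact p.Prime] {x : ℕ} (hx : p ≤ x) : (p.digits x).sum < x := by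
  have hv : 1 ≤ padicValNat p x ! :=
    one_le_padicValNat_of_dvd (factorial_ne_zero x) (dvd_factorial hp.out.pos hx)
  have := Nat.mul_le_mul_left (p - 1) hv
  rw [sub_one_mul_padicValNat_factorial] at this
  have := hp.out.two_le
  omega

theorem div_add_mod_lt {q x : ℕ} (hq : 1 < q) (hx : q ≤ x) : x / q + x % q < x := by
  have hm : 1 ≤ x / q := (one_le_div_iff (by omega)).mpr hx
  have := mod_add_div x q
  nlinarith

theorem digits_sum_of_lt {x : ℕ} (hx : x < p) : (p.digits x).sum = x := by
  rcases eq_or_ne x 0 with rfl | hx0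
  · simp
  · simp [digits_of_lt p x hx0 hx]

theorem digits_sum_add_pow_mul (hp : 1 < p) {k r : ℕ} (hr : r < p ^ k) (m : ℕ) :
    (p.digits (r + p ^ k * m)).sum = (p.digits r).sum + (p.digits m).sum := by
  rcases eq_or_ne m 0 with rfl | hm
  · simp
  have hlen : (p.digits r).length ≤ k := (digits_length_le_iff hp r).mpr hr
  rw [← Nat.add_sub_cancel' hlen, ← digits_append_zeroes_append_digits hp (pos_of_ne_zero hm)]
  simp

theorem digits_sum_div_add_mod_pow_le [hp : Fact p.Prime] (x e : ℕ) :
    (p.digits (x / p ^ e + x % p ^ e)).sum ≤ (p.digits x).sum := by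
  have hlow : x % p ^ e < p ^ e := mod_lt x (pow_pos hp.out.pos e)
  calc _ ≤ (p.digits (x / p ^ e)).sum + (p.digits (x % p ^ e)).sum := digits_sum_add_le _ _
    _ = (p.digits x).sum := by
      rw [add_comm, ← digits_sum_add_pow_mul hp.out.one_lt hlow, mod_add_div]

theorem digits_sum_pow_mul (hp : 1 < p) (k m : ℕ) :
    (p.digits (p ^ k * m)).sum = (p.digits m).sum := by
  simpa using digits_sum_add_pow_mul hp (pow_pos (zero_lt_of_lt hp) k) m

theorem digits_sum_sub_digit_mul_pow_add (hp : 1 < p) (x k : ℕ) :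
    (p.digits (x - p ^ k * (x / p ^ k % p))).sum + x / p ^ k % p = (p.digits x).sum := by
  have hL : x % p ^ k < p ^ k := mod_lt x (pow_pos (zero_lt_of_lt hp) k)
  have hD : x / p ^ k % p < p := mod_lt _ (zero_lt_of_lt hp)
  have hx : x = x % p ^ k + p ^ k * (x / p ^ k % p + p * (x / p ^ k / p)) := by
    rw [mod_add_div, mod_add_div]
  generalize x / p ^ k % p = D at *
  generalize x / p ^ k / p = H at *
  generalize x % p ^ k = L at *
  subst hx
  have hsub : L + p ^ k * (D + p * H) - p ^ k * D = L + p ^ k * (p * H) := by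
    rw [mul_add]; omega
  have hpH : (p.digits (p * H)).sum = (p.digits H).sum := by
    simpa using digits_sum_pow_mul hp 1 H
  have hhigh := digits_sum_add_pow_mul hp (k := 1) (r := D) (by rwa [pow_one]) H
  rw [pow_one, digits_sum_of_lt hD] at hhigh
  rw [hsub, digits_sum_add_pow_mul hp hL, digits_sum_add_pow_mul hp hL, hpH, hhigh]
  ring

section FinDigits

variable {a : ℕ} {d : Fin a → ℕ}

theorem sum_mul_pow_lt (hd : ∀ k, d k < p) : ∑ k, d k * p ^ (k : ℕ) < p ^ a :=
  (finFunctionFinEquiv fun k => (⟨d k, hd k⟩ : Fin p)).isLt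

theorem sum_mul_pow_div_pow_mod (hd : ∀ k, d k < p) (k : Fin a) :
    (∑ k, d k * p ^ (k : ℕ)) / p ^ (k : ℕ) % p = d k :=
  congrArg (fun f => (f k : ℕ))
    (finFunctionFinEquiv.symm_apply_apply fun k => (⟨d k, hd k⟩ : Fin p))

theorem sum_div_pow_mod_mul_pow {x : ℕ} (hx : x < p ^ a) :
    ∑ k : Fin a, x / p ^ (k : ℕ) % p * p ^ (k : ℕ) = x :=
  congrArg Fin.val (finFunctionFinEquiv.apply_symm_apply (⟨x, hx⟩ : Fin (p ^ a)))

theorem digits_sum_sum_mul_pow (hp : 1 < p) (hd : ∀ k, d k < p) :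
    (p.digits (∑ k, d k * p ^ (k : ℕ))).sum = ∑ k, d k := by
  induction a with
  | zero => simp
  | succ a ih =>
    have hlow := sum_mul_pow_lt fun k => hd (Fin.castSucc k)
    simp only [Fin.sum_univ_castSucc, Fin.val_castSucc, Fin.val_last]
    rw [mul_comm _ (p ^ a), digits_sum_add_pow_mul hp hlow, ih fun k => hd (Fin.castSucc k),
      digits_sum_of_lt (hd _)]

theorem sum_range_div_pow_mod (hp : 1 < p) {x : ℕ} (hx : x < p ^ a) :
    ∑ k ∈ range a, x / p ^ k % p = (p.digits x).sum := by
  conv_rhs => rw [← sum_div_pow_mod_mul_pow hx]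
  rw [digits_sum_sum_mul_pow hp fun k => mod_lt _ (zero_lt_of_lt hp),
    Fin.sum_univ_eq_sum_range (fun k => x / p ^ k % p)]

end FinDigits

end Nat

section Reduction

variable {n N : ℕ} (a : Fin N → Fin n → ℤ)

def linComb : (Fin N → ℕ) →+ (Fin n → ℤ) where
  toFun v j := ∑ i, (v i : ℤ) * a i j
  map_zero' := by ext; simp
  map_add' u v := by ext; simp [add_mul, sum_add_distrib]

@[simp]
theorem linComb_apply (v : Fin N → ℕ) (j : Fin n) : linComb a v j = ∑ i, (v i : ℤ) * a i j :=
  rfl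

@[simp]
theorem linComb_single_one (i : Fin N) : linComb a (Pi.single i 1) = a i := by
  ext j
  simp [Pi.single_apply]

-- `boundedSolutions a q M` is the paper's `U_M`.
def boundedSolutions (q : ℕ) (M : Set (Fin n → ℤ)) : Set (Fin N → ℕ) :=
  {v | (∀ i, v i < q) ∧ linComb a v ∈ M}

def ReductionClosed (q : ℕ) (M : Set (Fin n → ℤ)) : Prop :=
  ∀ c, linComb a c ∈ M → ∀ i₀, q ≤ c i₀ → linComb a c - ((q : ℤ) - 1) • a i₀ ∈ M

def digitWeight (p : ℕ) (v : Fin N → ℕ) : ℕ := ∑ i, (p.digits (v i)).sum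

variable {a} {q : ℕ} {M : Set (Fin n → ℤ)}

theorem ReductionClosed.mem_of_add_nsmul_single (hM : ReductionClosed a q M) (hq : 1 ≤ q)
    {c : Fin N → ℕ} {i₀ : Fin N} (hc : 1 ≤ c i₀) (m : ℕ)
    (h : linComb a (c + (m * (q - 1)) • Pi.single i₀ 1) ∈ M) : linComb a c ∈ M := by
  induction m with
  | zero => simpa using h
  | succ m ih =>
    apply ih
    set c' := c + (m * (q - 1)) • Pi.single i₀ (1 : ℕ)
    have hsplit : c + ((m + 1) * (q - 1)) • Pi.single i₀ 1 = c' + (q - 1) • Pi.single i₀ 1 := by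
      rw [add_mul, one_mul, add_nsmul, add_assoc]
    have hge : q ≤ (c' + (q - 1) • Pi.single i₀ 1 : Fin N → ℕ) i₀ := by
      simp only [c', Pi.add_apply, Pi.smul_apply, Pi.single_eq_same, smul_eq_mul, mul_one]
      omega
    rw [hsplit] at h
    convert hM _ h i₀ hge using 1
    rw [map_add (linComb a) c', map_nsmul, linComb_single_one, ← Nat.cast_smul_eq_nsmul ℤ,
      Nat.cast_sub hq, Nat.cast_one, add_sub_cancel_right]

theorem ReductionClosed.update_div_add_mod (hM : ReductionClosed a q M) (hq : 0 < q)
    {c : Fin N → ℕ} (hc : linComb a c ∈ M) {i₀ : Fin N} (hi₀ : q ≤ c i₀) :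
    linComb a (Function.update c i₀ (c i₀ / q + c i₀ % q)) ∈ M := by
  have hm : 1 ≤ c i₀ / q := (Nat.one_le_div_iff hq).mpr hi₀
  refine hM.mem_of_add_nsmul_single hq (by rw [Function.update_self]; omega) (c i₀ / q) ?_
  convert hc using 2
  ext i
  rcases eq_or_ne i i₀ with rfl | hi
  · have := Nat.div_add_mod (c i) q
    obtain ⟨q, rfl⟩ := Nat.exists_eq_add_of_le' hq
    simp only [Pi.add_apply, Pi.smul_apply, Function.update_self, Pi.single_eq_same,
      smul_eq_mul, mul_one, Nat.add_sub_cancel]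
    nlinarith
  · simp [hi]

theorem ReductionClosed.exists_digitWeight_le {p e : ℕ} [hp : Fact p.Prime] (he : 0 < e)
    (hM : ReductionClosed a (p ^ e) M) (c : Fin N → ℕ) (hc : linComb a c ∈ M) :
    ∃ u ∈ boundedSolutions a (p ^ e) M, digitWeight p u ≤ digitWeight p c := by
  by_cases hlt : ∀ i, c i < p ^ e
  · exact ⟨c, ⟨hlt, hc⟩, le_rfl⟩
  simp only [not_forall, not_lt] at hlt
  obtain ⟨i₀, hi₀⟩ := hlt
  have hq : 1 < p ^ e := Nat.one_lt_pow he.ne' hp.out.one_lt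
  set c' := Function.update c i₀ (c i₀ / p ^ e + c i₀ % p ^ e)
  have hdecr : ∑ i, c' i < ∑ i, c i := by
    refine sum_lt_sum (fun i _ => ?_) ⟨i₀, mem_univ _, ?_⟩
    · rcases eq_or_ne i i₀ with rfl | hi
      · simpa [c'] using (Nat.div_add_mod_lt hq hi₀).le
      · simp [c', hi]
    · simpa [c'] using Nat.div_add_mod_lt hq hi₀
  obtain ⟨u, hu, hle⟩ :=
    hM.exists_digitWeight_le he c' (hM.update_div_add_mod (zero_lt_one.trans hq) hc hi₀)
  refine ⟨u, hu, hle.trans (sum_le_sum fun i _ => ?_)⟩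
  rcases eq_or_ne i i₀ with rfl | hi
  · simpa [c'] using Nat.digits_sum_div_add_mod_pow_le (c i) e
  · simp [c', hi]
termination_by ∑ i, c i

end Reduction

section Decomposition

variable {n N : ℕ} (a : Fin N → Fin n → ℤ)

noncomputable def minRepWeight (β : Fin n → ℤ) : ℕ :=
  sInf {s | ∃ v : Fin N → ℕ, linComb a v = β ∧ ∑ i, v i = s}

-- `IsMinRep a β` describes the paper's `U⁺_min(β)`, `digitSeqs a p e M m` is `Γ_M` when `m` is the
-- minimal weight, and `digitBlock a p γ` is `U(γ)`.
def IsMinRep (β : Fin n → ℤ) (v : Fin N → ℕ) : Prop :=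
  linComb a v = β ∧ ∀ v', linComb a v' = β → ∑ i, v i ≤ ∑ i, v' i

def IsGood (p : ℕ) (β : Fin n → ℤ) : Prop :=
  ∀ v, IsMinRep a β v → ∀ i, v i < p

def digitVec (p k : ℕ) (u : Fin N → ℕ) : Fin N → ℕ := fun i => u i / p ^ k % p

def composeDigits {e : ℕ} (p : ℕ) (d : Fin e → Fin N → ℕ) : Fin N → ℕ :=
  fun i => ∑ k, d k i * p ^ (k : ℕ)

def digitSeqs (p e : ℕ) (M : Set (Fin n → ℤ)) (m : ℕ) : Set (Fin e → Fin n → ℤ) :=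
  {γ | (∀ k, IsGood a p (γ k)) ∧ (fun j => ∑ k : Fin e, (p : ℤ) ^ (k : ℕ) * γ k j) ∈ M ∧
    ∑ k, minRepWeight a (γ k) = m}

def digitBlock {e : ℕ} (p : ℕ) (γ : Fin e → Fin n → ℤ) : Set (Fin N → ℕ) :=
  {u | ∃ d, (∀ k, IsMinRep a (γ k) (d k)) ∧ u = composeDigits p d}

variable {a}

theorem isMinRep_iff {β : Fin n → ℤ} {v : Fin N → ℕ} :
    IsMinRep a β v ↔ linComb a v = β ∧ ∑ i, v i = minRepWeight a β := by
  constructor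
  · rintro ⟨hv, hmin⟩
    refine ⟨hv, le_antisymm (le_csInf ⟨_, v, hv, rfl⟩ ?_) (Nat.sInf_le ⟨v, hv, rfl⟩)⟩
    rintro _ ⟨v', hv', rfl⟩
    exact hmin v' hv'
  · rintro ⟨hv, hsum⟩
    exact ⟨hv, fun v' hv' => hsum ▸ Nat.sInf_le ⟨v', hv', rfl⟩⟩

section Minimal

variable {M : Set (Fin n → ℤ)} {p e : ℕ} [hp : Fact p.Prime]

theorem sum_digitVec_le_digitWeight (hM : ReductionClosed a (p ^ e) M)
    {u : Fin N → ℕ} (huM : linComb a u ∈ M)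
    (hmin : ∀ u' ∈ boundedSolutions a (p ^ e) M, digitWeight p u ≤ digitWeight p u')
    {k : ℕ} (hk : k < e) {v : Fin N → ℕ} (hv : linComb a v = linComb a (digitVec p k u)) :
    ∑ i, digitVec p k u i ≤ digitWeight p v := by
  set D := digitVec p k u
  set A := u - p ^ k • D
  have hAu : A + p ^ k • D = u := tsub_add_cancel_of_le fun i =>
    (Nat.mul_le_mul_left _ (Nat.mod_le _ _)).trans (Nat.mul_div_le (u i) (p ^ k))
  -- Swap the `k`-th digit vector `D` of `u` for `v`: the point stays over `M`, so reducing it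
  -- cannot beat `u`, while its weight is that of `u` with `∑ D` traded for at most `∑ s(vᵢ)`.
  have hc : linComb a (A + p ^ k • v) ∈ M := by
    rwa [map_add, map_nsmul, hv, ← map_nsmul, ← map_add, hAu]
  obtain ⟨u', hu', hle⟩ := hM.exists_digitWeight_le ((Nat.zero_le k).trans_lt hk) _ hc
  have hc_le : digitWeight p (A + p ^ k • v) ≤
      ∑ i, ((p.digits (A i)).sum + (p.digits (v i)).sum) := sum_le_sum fun i _ =>
    (Nat.digits_sum_add_le _ _).trans_eq (by simp [Nat.digits_sum_pow_mul hp.out.one_lt])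
  have hu_eq : digitWeight p u = ∑ i, ((p.digits (A i)).sum + D i) :=
    sum_congr rfl fun i _ => (Nat.digits_sum_sub_digit_mul_pow_add hp.out.one_lt (u i) k).symm
  have := hmin u' hu'
  rw [sum_add_distrib] at hc_le hu_eq
  unfold digitWeight at *
  omega

theorem isMinRep_digitVec (hM : ReductionClosed a (p ^ e) M)
    {u : Fin N → ℕ} (huM : linComb a u ∈ M)
    (hmin : ∀ u' ∈ boundedSolutions a (p ^ e) M, digitWeight p u ≤ digitWeight p u')
    {k : ℕ} (hk : k < e) : IsMinRep a (linComb a (digitVec p k u)) (digitVec p k u) :=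
  ⟨rfl, fun v hv => (sum_digitVec_le_digitWeight hM huM hmin hk hv).trans
    (sum_le_sum fun i _ => Nat.digit_sum_le p (v i))⟩

theorem isGood_linComb_digitVec (hM : ReductionClosed a (p ^ e) M)
    {u : Fin N → ℕ} (huM : linComb a u ∈ M)
    (hmin : ∀ u' ∈ boundedSolutions a (p ^ e) M, digitWeight p u ≤ digitWeight p u')
    {k : ℕ} (hk : k < e) : IsGood a p (linComb a (digitVec p k u)) := by
  intro v hv i
  by_contra! hi
  have hlt : digitWeight p v < ∑ i, v i :=
    sum_lt_sum (fun i _ => Nat.digit_sum_le p _) ⟨i, mem_univ _, Nat.digits_sum_lt_self hi⟩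
  have := hv.2 _ rfl
  have := sum_digitVec_le_digitWeight hM huM hmin hk hv.1
  omega

end Minimal

section Compose

variable {p e : ℕ} {d : Fin e → Fin N → ℕ}

theorem composeDigits_lt (hd : ∀ k i, d k i < p) (i : Fin N) : composeDigits p d i < p ^ e :=
  Nat.sum_mul_pow_lt fun k => hd k i

theorem digitVec_composeDigits (hd : ∀ k i, d k i < p) (k : Fin e) :
    digitVec p k (composeDigits p d) = d k :=
  funext fun i => Nat.sum_mul_pow_div_pow_mod (fun k => hd k i) k

theorem composeDigits_digitVec {u : Fin N → ℕ} (hu : ∀ i, u i < p ^ e) :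
    composeDigits p (fun k : Fin e => digitVec p k u) = u :=
  funext fun i => Nat.sum_div_pow_mod_mul_pow (hu i)

theorem digitWeight_composeDigits (hp : 1 < p) (hd : ∀ k i, d k i < p) :
    digitWeight p (composeDigits p d) = ∑ k, ∑ i, d k i := by
  rw [digitWeight, sum_comm]
  exact sum_congr rfl fun i _ => Nat.digits_sum_sum_mul_pow hp fun k => hd k i

theorem linComb_composeDigits {γ : Fin e → Fin n → ℤ} (hγ : ∀ k, linComb a (d k) = γ k) :
    linComb a (composeDigits p d) = fun j => ∑ k : Fin e, (p : ℤ) ^ (k : ℕ) * γ k j := by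
  ext j
  simp only [linComb_apply, composeDigits, ← hγ, Nat.cast_sum, Nat.cast_mul, Nat.cast_pow, sum_mul,
    mul_sum]
  rw [sum_comm]
  exact sum_congr rfl fun k _ => sum_congr rfl fun i _ => by ring

theorem exists_digits_of_mem_digitBlock {γ : Fin e → Fin n → ℤ} (hγ : ∀ k, IsGood a p (γ k))
    {u : Fin N → ℕ} (hu : u ∈ digitBlock a p γ) :
    ∃ d : Fin e → Fin N → ℕ, (∀ k, IsMinRep a (γ k) (d k)) ∧ (∀ k i, d k i < p) ∧
      u = composeDigits p d := by
  obtain ⟨d, hd, rfl⟩ := hu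
  exact ⟨d, hd, fun k i => hγ k _ (hd k) i, rfl⟩

end Compose

section Main

variable {M : Set (Fin n → ℤ)} {p e m : ℕ}

theorem pairwiseDisjoint_digitBlock : (digitSeqs a p e M m).PairwiseDisjoint (digitBlock a p) := by
  intro γ hγ γ' hγ' hne
  refine Set.disjoint_left.2 fun u hu hu' => hne ?_
  obtain ⟨d, hd, hdp, rfl⟩ := exists_digits_of_mem_digitBlock hγ.1 hu
  obtain ⟨d', hd', hdp', hdd'⟩ := exists_digits_of_mem_digitBlock hγ'.1 hu'
  funext k
  rw [← (hd k).1, ← (hd' k).1, ← digitVec_composeDigits hdp k, hdd', digitVec_composeDigits hdp' k]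

theorem setOf_digitWeight_eq_eq_biUnion_digitBlock [hp : Fact p.Prime]
    (hM : ReductionClosed a (p ^ e) M)
    (hm : IsLeast (digitWeight p '' boundedSolutions a (p ^ e) M) m) :
    {u ∈ boundedSolutions a (p ^ e) M | digitWeight p u = m} =
      ⋃ γ ∈ digitSeqs a p e M m, digitBlock a p γ := by
  ext u
  simp only [Set.mem_ofPred_eq, Set.mem_iUnion, exists_prop]
  constructor
  · rintro ⟨⟨hu, huM⟩, rfl⟩
    have hmin : ∀ u' ∈ boundedSolutions a (p ^ e) M, digitWeight p u ≤ digitWeight p u' :=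
      fun u' hu' => hm.2 ⟨u', hu', rfl⟩
    set d := fun k : Fin e => digitVec p k u
    have hd k : IsMinRep a (linComb a (d k)) (d k) := isMinRep_digitVec hM huM hmin k.isLt
    have hdp : ∀ k i, d k i < p := fun k i => Nat.mod_lt _ hp.out.pos
    have hud : composeDigits p d = u := composeDigits_digitVec hu
    refine ⟨fun k => linComb a (d k),
      ⟨fun k => isGood_linComb_digitVec hM huM hmin k.isLt, ?_, ?_⟩, d, hd, hud.symm⟩
    · rwa [← linComb_composeDigits fun k => rfl, hud]
    · rw [← hud, digitWeight_composeDigits hp.out.one_lt hdp]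
      exact sum_congr rfl fun k _ => ((isMinRep_iff.1 (hd k)).2).symm
  · rintro ⟨γ, ⟨hγ, hγM, rfl⟩, hu⟩
    obtain ⟨d, hd, hdp, rfl⟩ := exists_digits_of_mem_digitBlock hγ hu
    refine ⟨⟨composeDigits_lt hdp, by rwa [linComb_composeDigits fun k => (hd k).1]⟩, ?_⟩
    rw [digitWeight_composeDigits hp.out.one_lt hdp]
    exact sum_congr rfl fun k _ => (isMinRep_iff.1 (hd k)).2

end Main

end Decomposition

theorem stmt11_general {n N : ℕ} (a : Fin N → Fin n → ℤ) (p : ℕ) (hp : p.Prime)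
    (aexp : ℕ) (q : ℕ) (hq : q = p ^ aexp)
    (M : Set (Fin n → ℤ))
    (hM : ∀ c : Fin N → ℕ, (fun j => ∑ i, (c i : ℤ) * a i j) ∈ M →
      ∀ i₀ : Fin N, q ≤ c i₀ →
        (fun j => (∑ i, (c i : ℤ) * a i j) - ((q : ℤ) - 1) * a i₀ j) ∈ M)
    (UM : Set (Fin N → ℕ))
    (hUM : UM = {v | (∀ i, v i ≤ q - 1) ∧
      (fun j => ∑ i, (v i : ℤ) * a i j) ∈ M})
    (wp : (Fin N → ℕ) → ℕ)
    (hwp : ∀ v, wp v = ∑ i, ∑ k ∈ Finset.range aexp, (v i / p ^ k) % p)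
    (wpM : ℕ) (hwpM : IsLeast {s | ∃ v ∈ UM, wp v = s} wpM)
    (UMmin : Set (Fin N → ℕ)) (hUMmin : UMmin = {v ∈ UM | wp v = wpM})
    (w : (Fin n → ℤ) → ℕ)
    (hw : ∀ β, w β = sInf {s | ∃ v : Fin N → ℕ,
      (∀ j, ∑ i, (v i : ℤ) * a i j = β j) ∧ ∑ i, v i = s})
    (UminP : (Fin n → ℤ) → (Fin N → ℕ) → Prop)
    (hUminP : ∀ β v, UminP β v ↔
      ((∀ j, ∑ i, (v i : ℤ) * a i j = β j) ∧ ∑ i, v i = w β))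
    (good : (Fin n → ℤ) → Prop)
    (hgood : ∀ β, good β ↔ ∀ v, UminP β v → ∀ i, v i ≤ p - 1)
    (ΓM : Set (Fin aexp → Fin n → ℤ))
    (hΓM : ∀ γseq, γseq ∈ ΓM ↔
      ((∀ k, good (γseq k)) ∧
        (fun j => ∑ k : Fin aexp, (p : ℤ) ^ (k : ℕ) * γseq k j) ∈ M ∧
        ∑ k : Fin aexp, w (γseq k) = wpM))
    (Uγ : (Fin aexp → Fin n → ℤ) → Set (Fin N → ℕ))
    (hUγ : ∀ γseq u, u ∈ Uγ γseq ↔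
      ∃ d : Fin aexp → Fin N → ℕ, (∀ k, UminP (γseq k) (d k)) ∧
        ∀ i, u i = ∑ k : Fin aexp, d k i * p ^ (k : ℕ)) :
    (UMmin = ⋃ γseq ∈ ΓM, Uγ γseq) ∧
      ∀ γseq ∈ ΓM, ∀ γseq' ∈ ΓM, γseq ≠ γseq' →
        Disjoint (Uγ γseq) (Uγ γseq') := by
  have := Fact.mk hp
  subst hq hUM hUMmin
  obtain rfl : w = minRepWeight a := funext fun β => by
    simp only [hw, minRepWeight, funext_iff, linComb_apply]
  obtain rfl : UminP = IsMinRep a := by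
    ext β v
    simp only [hUminP, isMinRep_iff, funext_iff, linComb_apply]
  obtain rfl : good = IsGood a p := by
    ext β
    simp only [hgood, IsGood, Nat.le_sub_one_iff_lt hp.pos]
  obtain rfl : ΓM = digitSeqs a p aexp M wpM := Set.ext hΓM
  obtain rfl : Uγ = digitBlock a p := by
    ext γ u
    simp only [hUγ, digitBlock, funext_iff, composeDigits, Set.mem_ofPred_eq]
  have hUM_eq : {v | (∀ i, v i ≤ p ^ aexp - 1) ∧ (fun j => ∑ i, (v i : ℤ) * a i j) ∈ M} =
      boundedSolutions a (p ^ aexp) M := by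
    simp only [Nat.le_sub_one_iff_lt (pow_pos hp.pos _)]
    rfl
  have hwp_eqOn : Set.EqOn wp (digitWeight p) (boundedSolutions a (p ^ aexp) M) := fun v hv => by
    rw [hwp]
    exact sum_congr rfl fun i _ => Nat.sum_range_div_pow_mod hp.one_lt (hv.1 i)
  rw [hUM_eq] at hwpM ⊢
  rw [← Set.image, hwp_eqOn.image_eq] at hwpM
  refine ⟨?_, pairwiseDisjoint_digitBlock⟩
  rw [← setOf_digitWeight_eq_eq_biUnion_digitBlock hM hwpM]
  ext v
  exact and_congr_right fun hv => by rw [hwp_eqOn hv]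

/-- Proposition 5.14: the set `U_{M,min}` of minimizers of the `p`-weight on
`U_M` decomposes as a disjoint union, over sequences `(γ_0,…,γ_{a-1}) ∈ Γ_M` of
good elements with `Σ_k p^k γ_k ∈ M` and `Σ_k w(γ_k) = w_p(M)`, of the sets
`U(γ_0,…,γ_{a-1})` of vectors assembled from digit choices in `U⁺_min(γ_k)`. -/
theorem stmt11 {n N : ℕ} (a : Fin N → Fin n → ℤ) (p : ℕ) (hp : p.Prime)
    (aexp : ℕ) (q : ℕ) (hq : q = p ^ aexp)
    (M : Set (Fin n → ℤ))
    (hM : ∀ c : Fin N → ℕ, (fun j => ∑ i, (c i : ℤ) * a i j) ∈ M →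
      ∀ i₀ : Fin N, q ≤ c i₀ →
        (fun j => (∑ i, (c i : ℤ) * a i j) - ((q : ℤ) - 1) * a i₀ j) ∈ M)
    (UM : Set (Fin N → ℕ))
    (hUM : UM = {v | (∀ i, v i ≤ q - 1) ∧
      (fun j => ∑ i, (v i : ℤ) * a i j) ∈ M})
    (hUMne : UM.Nonempty)
    (wp : (Fin N → ℕ) → ℕ)
    (hwp : ∀ v, wp v = ∑ i, ∑ k ∈ Finset.range aexp, (v i / p ^ k) % p)
    (wpM : ℕ) (hwpM : IsLeast {s | ∃ v ∈ UM, wp v = s} wpM)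
    (UMmin : Set (Fin N → ℕ)) (hUMmin : UMmin = {v ∈ UM | wp v = wpM})
    (w : (Fin n → ℤ) → ℕ)
    (hw : ∀ β, w β = sInf {s | ∃ v : Fin N → ℕ,
      (∀ j, ∑ i, (v i : ℤ) * a i j = β j) ∧ ∑ i, v i = s})
    (UminP : (Fin n → ℤ) → (Fin N → ℕ) → Prop)
    (hUminP : ∀ β v, UminP β v ↔
      ((∀ j, ∑ i, (v i : ℤ) * a i j = β j) ∧ ∑ i, v i = w β))
    (good : (Fin n → ℤ) → Prop)
    (hgood : ∀ β, good β ↔ ∀ v, UminP β v → ∀ i, v i ≤ p - 1)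
    (ΓM : Set (Fin aexp → Fin n → ℤ))
    (hΓM : ∀ γseq, γseq ∈ ΓM ↔
      ((∀ k, good (γseq k)) ∧
        (fun j => ∑ k : Fin aexp, (p : ℤ) ^ (k : ℕ) * γseq k j) ∈ M ∧
        ∑ k : Fin aexp, w (γseq k) = wpM))
    (Uγ : (Fin aexp → Fin n → ℤ) → Set (Fin N → ℕ))
    (hUγ : ∀ γseq u, u ∈ Uγ γseq ↔
      ∃ d : Fin aexp → Fin N → ℕ, (∀ k, UminP (γseq k) (d k)) ∧
        ∀ i, u i = ∑ k : Fin aexp, d k i * p ^ (k : ℕ)) :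
    (UMmin = ⋃ γseq ∈ ΓM, Uγ γseq) ∧
      ∀ γseq ∈ ΓM, ∀ γseq' ∈ ΓM, γseq ≠ γseq' →
        Disjoint (Uγ γseq) (Uγ γseq') :=
  stmt11_general a p hp aexp q hq M hM UM hUM wp hwp wpM hwpM UMmin hUMmin w hw UminP hUminP good
    hgood ΓM hΓM Uγ hUγ
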